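/- For β ∈ ℝ with |β| < π, the function f₀^{(β)}(y) = (1/√2)·√( y⁴/4 + cos β + √(1 + cos β · y⁴/2 + y⁸/16) ) − y²/2 satisfies f₀^{(β)}(y) = cos(β)/y² + O(1/y⁶) as |y| → ∞; in particular c(β) = ∫_ℝ f₀^{(β)}(y) dy is absolutely convergent. -/

import Mathlib

open MeasureTheory

/-- The function f₀^{(β)} appearing in the asymptotics along the ray arg(-η) = β. -/
noncomputable def f0beta (β y : ℝ) : ℝ :=
  (1 / Real.sqrt 2) *
    Real.sqrt (y ^ 4 / 4 + Real.cos β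
      + Real.sqrt (1 + Real.cos β * y ^ 4 / 2 + y ^ 8 / 16))
    - y ^ 2 / 2

lemma f0_inner_nonneg (c y : ℝ) (h1 : -1 ≤ c) (h2 : c ≤ 1) :
    0 ≤ 1 + c * y ^ 4 / 2 + y ^ 8 / 16 := by
  nlinarith [sq_nonneg (y ^ 4 / 4 + c),
    mul_nonneg (by linarith : (0:ℝ) ≤ 1 + c) (by linarith : (0:ℝ) ≤ 1 - c)]

lemma f0_sum_nonneg (c y : ℝ) (h1 : -1 ≤ c) (h2 : c ≤ 1) :
    0 ≤ y ^ 4 / 4 + c + Real.sqrt (1 + c * y ^ 4 / 2 + y ^ 8 / 16) := by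
  have h : -(y ^ 4 / 4 + c) ≤ Real.sqrt (1 + c * y ^ 4 / 2 + y ^ 8 / 16) := by
    apply Real.le_sqrt_of_sq_le
    nlinarith [mul_nonneg (by linarith : (0:ℝ) ≤ 1 + c) (by linarith : (0:ℝ) ≤ 1 - c)]
  linarith

set_option maxHeartbeats 1000000 in
/-- Main pointwise estimate, for `1 ≤ y²`. -/
lemma f0_est (c y : ℝ) (h1 : -1 ≤ c) (h2 : c ≤ 1) (hy : 1 ≤ y ^ 2) :
    |((1 / Real.sqrt 2) *
        Real.sqrt (y ^ 4 / 4 + c + Real.sqrt (1 + c * y ^ 4 / 2 + y ^ 8 / 16))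
      - y ^ 2 / 2) - c / y ^ 2| ≤ 69 / y ^ 6 := by
  have hy2 : (0:ℝ) < y ^ 2 := by linarith
  have hy4 : (1:ℝ) ≤ y ^ 4 := by nlinarith
  have hy4p : (0:ℝ) < y ^ 4 := by linarith
  have hy6p : (0:ℝ) < y ^ 6 := by nlinarith
  have hy6 : (1:ℝ) ≤ y ^ 6 := by nlinarith
  have hc4 : (0:ℝ) ≤ (1 + c) * y ^ 4 := mul_nonneg (by linarith) (by positivity)
  set S : ℝ := Real.sqrt (1 + c * y ^ 4 / 2 + y ^ 8 / 16) with hSdef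
  have hS0 : 0 ≤ S := Real.sqrt_nonneg _
  set u : ℝ := y ^ 4 / 4 + c + S with hudef
  have hu0 : 0 ≤ u := f0_sum_nonneg c y h1 h2
  have hrw : (1 / Real.sqrt 2) * Real.sqrt u = Real.sqrt (u / 2) := by
    rw [Real.sqrt_div hu0]; ring
  rw [hrw]
  -- upper bound on S
  have hSle : S ≤ (y ^ 8 / 4 + c * y ^ 4 + 2) / y ^ 4 := by
    rw [hSdef]
    apply Real.sqrt_le_iff.mpr
    refine ⟨div_nonneg (by nlinarith [sq_nonneg (y ^ 4 - 2)]) hy4p.le, ?_⟩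
    rw [div_pow, le_div_iff₀ (by positivity)]
    nlinarith [sq_nonneg (c * y ^ 4 + 2)]
  have hPdiv : (y ^ 8 / 4 + c * y ^ 4 + 2) / y ^ 4 * y ^ 4 = y ^ 8 / 4 + c * y ^ 4 + 2 := by
    rw [div_mul_cancel₀ _ hy4p.ne']
  have hSle4 : S * y ^ 4 ≤ y ^ 8 / 4 + c * y ^ 4 + 2 := by
    have := mul_le_mul_of_nonneg_right hSle hy4p.le
    rwa [hPdiv] at this
  have hu4 : u * y ^ 4 = y ^ 8 / 4 + c * y ^ 4 + S * y ^ 4 := by rw [hudef]; ring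
  have huu2 : u * y ^ 4 ≤ y ^ 8 / 2 + 2 * (c * y ^ 4) + 2 := by linarith
  -- lower bound on S
  have hSge : y ^ 4 / 4 + c ≤ S := by
    apply Real.le_sqrt_of_sq_le
    nlinarith [mul_nonneg (by linarith : (0:ℝ) ≤ 1 + c) (by linarith : (0:ℝ) ≤ 1 - c)]
  have hu_ge : y ^ 4 / 2 + 2 * c ≤ u := by rw [hudef]; linarith
  -- Upper estimate, valid for all y² ≥ 1
  have hQ : (y ^ 8 / 2 + c * y ^ 4 + 2) / y ^ 6 = y ^ 2 / 2 + c / y ^ 2 + 2 / y ^ 6 := by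
    field_simp
  have hupper : Real.sqrt (u / 2) ≤ y ^ 2 / 2 + c / y ^ 2 + 2 / y ^ 6 := by
    rw [← hQ]
    apply Real.sqrt_le_iff.mpr
    refine ⟨div_nonneg (by nlinarith [sq_nonneg (y ^ 4 - 2)]) hy6p.le, ?_⟩
    rw [div_pow, le_div_iff₀ (by positivity)]
    have hm := mul_le_mul_of_nonneg_right huu2 (by positivity : (0:ℝ) ≤ y ^ 8)
    nlinarith [hm, sq_nonneg (c * y ^ 4 + 2), (by positivity : (0:ℝ) ≤ y ^ 8)]
  have h269 : (2:ℝ) / y ^ 6 ≤ 69 / y ^ 6 := by gcongr <;> norm_num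
  have hub : (Real.sqrt (u / 2) - y ^ 2 / 2) - c / y ^ 2 ≤ 69 / y ^ 6 := by linarith
  -- Lower estimate
  have hlb : -(69 / y ^ 6) ≤ (Real.sqrt (u / 2) - y ^ 2 / 2) - c / y ^ 2 := by
    rcases le_or_gt 8 (y ^ 4) with h8 | h8
    · -- asymptotic regime
      have hQ' : (y ^ 8 / 2 + c * y ^ 4 - 2) / y ^ 6 = y ^ 2 / 2 + c / y ^ 2 - 2 / y ^ 6 := by
        field_simp
      have hlow : y ^ 2 / 2 + c / y ^ 2 - 2 / y ^ 6 ≤ Real.sqrt (u / 2) := by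
        rw [← hQ']
        apply Real.le_sqrt_of_sq_le
        rw [div_pow, div_le_iff₀ (by positivity)]
        have hm := mul_le_mul_of_nonneg_right hu_ge (by positivity : (0:ℝ) ≤ y ^ 12)
        nlinarith [hm,
          mul_nonneg (mul_nonneg (by linarith : (0:ℝ) ≤ 1 + c)
            (by linarith : (0:ℝ) ≤ 1 - c)) (by positivity : (0:ℝ) ≤ y ^ 8),
          mul_le_mul_of_nonneg_right h8 (by positivity : (0:ℝ) ≤ y ^ 4), hc4, hy4]
      have : -(2 / y ^ 6) ≤ (Real.sqrt (u / 2) - y ^ 2 / 2) - c / y ^ 2 := by linarith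
      linarith
    · -- bounded regime: 1 ≤ y^4 ≤ 8
      have hy2u : y ^ 2 ≤ 3 := by nlinarith
      have hy6u : y ^ 6 ≤ 24 := by nlinarith
      have hsq : (0:ℝ) ≤ Real.sqrt (u / 2) := Real.sqrt_nonneg _
      have hcy : c / y ^ 2 ≤ 1 := by
        rw [div_le_one hy2]; linarith
      have h69 : (5:ℝ) / 2 ≤ 69 / y ^ 6 := by
        rw [le_div_iff₀ hy6p]; nlinarith
      linarith
  exact abs_le.mpr ⟨hlb, hub⟩

/-- Crude bound for `y² ≤ 1`. -/
lemma f0_bound_small (c y : ℝ) (h1 : -1 ≤ c) (h2 : c ≤ 1) (hy : y ^ 2 ≤ 1) :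
    |(1 / Real.sqrt 2) *
        Real.sqrt (y ^ 4 / 4 + c + Real.sqrt (1 + c * y ^ 4 / 2 + y ^ 8 / 16))
      - y ^ 2 / 2| ≤ 2 := by
  have hy20 : (0:ℝ) ≤ y ^ 2 := by positivity
  have hy4 : y ^ 4 ≤ 1 := by nlinarith
  have hy40 : (0:ℝ) ≤ y ^ 4 := by positivity
  have hy8 : y ^ 8 ≤ 1 := by nlinarith
  set S : ℝ := Real.sqrt (1 + c * y ^ 4 / 2 + y ^ 8 / 16) with hSdef
  have hS0 : 0 ≤ S := Real.sqrt_nonneg _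
  have hSle : S ≤ 2 := by
    rw [hSdef]
    apply Real.sqrt_le_iff.mpr
    refine ⟨by norm_num, ?_⟩
    nlinarith [mul_nonneg (by linarith : (0:ℝ) ≤ 1 - c) hy40]
  set u : ℝ := y ^ 4 / 4 + c + S with hudef
  have hu0 : 0 ≤ u := f0_sum_nonneg c y h1 h2
  have hrw : (1 / Real.sqrt 2) * Real.sqrt u = Real.sqrt (u / 2) := by
    rw [Real.sqrt_div hu0]; ring
  rw [hrw]
  have huu : u ≤ 13 / 4 := by rw [hudef]; linarith
  have hsu : Real.sqrt (u / 2) ≤ 2 := by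
    apply Real.sqrt_le_iff.mpr
    refine ⟨by norm_num, by norm_num; linarith⟩
  have hsu0 : 0 ≤ Real.sqrt (u / 2) := Real.sqrt_nonneg _
  apply abs_le.mpr
  constructor <;> [linarith; linarith]

/-- For |β| < π: the expressions under the square roots are nonnegative,
f₀^{(β)}(y) = cos β / y² + O(1/y⁶) as |y| → ∞, and ∫_ℝ f₀^{(β)} converges absolutely. -/
theorem f0beta_asymptotics (β : ℝ) (hβ : |β| < Real.pi) :
    (∀ y : ℝ, 0 ≤ 1 + Real.cos β * y ^ 4 / 2 + y ^ 8 / 16) ∧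
    (∀ y : ℝ, 0 ≤ y ^ 4 / 4 + Real.cos β
        + Real.sqrt (1 + Real.cos β * y ^ 4 / 2 + y ^ 8 / 16)) ∧
    (∃ C : ℝ, ∀ y : ℝ, 1 ≤ |y| →
      |f0beta β y - Real.cos β / y ^ 2| ≤ C / y ^ 6) ∧
    Integrable (fun y => f0beta β y) := by
  have h1 : -1 ≤ Real.cos β := Real.neg_one_le_cos β
  have h2 : Real.cos β ≤ 1 := Real.cos_le_one β
  refine ⟨fun y => f0_inner_nonneg _ y h1 h2, fun y => f0_sum_nonneg _ y h1 h2,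
    ⟨69, fun y hy => ?_⟩, ?_⟩
  · have hy2 : 1 ≤ y ^ 2 := by nlinarith [sq_abs y]
    simpa [f0beta] using f0_est (Real.cos β) y h1 h2 hy2
  · have hcont : Continuous (f0beta β) := by unfold f0beta; fun_prop
    have hint : Integrable (fun y : ℝ => 140 * (1 + y ^ 2)⁻¹) :=
      integrable_inv_one_add_sq.const_mul 140
    apply hint.mono' hcont.aestronglyMeasurable
    filter_upwards with y
    rw [Real.norm_eq_abs]
    have hrw140 : 140 * (1 + y ^ 2)⁻¹ = 140 / (1 + y ^ 2) := by ring
    rcases le_or_gt 1 (y ^ 2) with hy | hy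
    · have hy2p : (0:ℝ) < y ^ 2 := by linarith
      have hy4 : (1:ℝ) ≤ y ^ 4 := by nlinarith
      have hy6 : (1:ℝ) ≤ y ^ 6 := by nlinarith [pow_le_pow_left₀ (zero_le_one) hy 3]
      have hy6p : (0:ℝ) < y ^ 6 := by linarith
      have hest : |f0beta β y - Real.cos β / y ^ 2| ≤ 69 / y ^ 6 :=
        f0_est (Real.cos β) y h1 h2 hy
      have htri := abs_sub_abs_le_abs_sub (f0beta β y) (Real.cos β / y ^ 2)
      have h69 : 69 / y ^ 6 ≤ 69 / y ^ 2 := by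
        rw [div_le_div_iff₀ hy6p hy2p]
        nlinarith [mul_nonneg hy2p.le (by linarith : (0:ℝ) ≤ y ^ 4 - 1)]
      have hcabs : |Real.cos β / y ^ 2| ≤ 1 / y ^ 2 := by
        rw [abs_div, abs_of_nonneg (by positivity : (0:ℝ) ≤ y ^ 2)]
        gcongr
        exact Real.abs_cos_le_one β
      have hfin : 70 / y ^ 2 ≤ 140 / (1 + y ^ 2) := by
        rw [div_le_div_iff₀ hy2p (by positivity)]
        nlinarith
      have hsplit : (69:ℝ) / y ^ 2 + 1 / y ^ 2 = 70 / y ^ 2 := by ring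
      rw [hrw140]
      linarith
    · have hb := f0_bound_small (Real.cos β) y h1 h2 hy.le
      have : (2:ℝ) ≤ 140 / (1 + y ^ 2) := by
        rw [le_div_iff₀ (by positivity)]
        nlinarith
      rw [hrw140]
      simp only [f0beta] at hb ⊢
      linarith
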